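/- (Reduction of the critical extremal condition.) Suppose |N₌|² = |N₋|·|N₊|. Then the following are equivalent: (A) every σ ∈ N₋ ∪ N₌ ∪ N₊ has at least one companion of x_ℓ incomparable to x_ℓ, and there exist nonnegative integers N₁, N₂ such that for every ∘ ∈ {−,=,+}: |N_∘(≁,∼)| = |N_∘(∼,≁)| = N₁ and |N_∘(≁,≁)| = N₂; (B) |N₋(∼,∼)| = |N₊(∼,∼)| = 0. -/

import Mathlib

open Pointwise

namespace Stanley

variable {A : Type*}

/-- Two elements of a partially ordered set are *incomparable*. -/
def Incomp [PartialOrder A] (a b : A) : Prop :=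
  ¬ a ≤ b ∧ ¬ b ≤ a

section PosetDefs

variable [PartialOrder A] (n k : ℕ) (x : ℤ → A) (i : ℤ → ℤ) (ℓ : ℤ)

/-- A linear extension of the `n`-element poset `ᾱ`, modelled as an injective
order-preserving map into `{1,…,n} ⊆ ℤ` (hence an order-preserving bijection
onto `{1,…,n}` since `card ᾱ = n`). -/
def IsLinExt (σ : A → ℤ) : Prop :=
  Function.Injective σ ∧ (∀ a : A, 1 ≤ σ a ∧ σ a ≤ (n : ℤ)) ∧
    ∀ w z : A, w ≤ z → σ w ≤ σ z

/-- The set `N_∘` of linear extensions placing `x_j` at `i_j` for `j ≠ ℓ` and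
`x_ℓ` at `i_ℓ + e`, where `e = 1_∘ ∈ {-1,0,1}`. -/
def N (e : ℤ) : Set (A → ℤ) :=
  { σ | IsLinExt n σ ∧ (∀ j : ℤ, 1 ≤ j → j ≤ (k : ℤ) → j ≠ ℓ → σ (x j) = i j) ∧
      σ (x ℓ) = i ℓ + e }

/-- The position of the *lower companion* of `x_ℓ` in a linear extension of `N_∘`. -/
def lowPos (e : ℤ) : ℤ := if e = -1 then i ℓ else i ℓ - 1

/-- The position of the *upper companion* of `x_ℓ` in a linear extension of `N_∘`. -/
def highPos (e : ℤ) : ℤ := if e = 1 then i ℓ else i ℓ + 1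

/-- `N_∘(⋆,∗)` : here `lowInc = true` encodes `⋆ = ≁` (lower companion incomparable
to `x_ℓ`) and `lowInc = false` encodes `⋆ = ∼`; similarly `upInc` for the upper
companion. -/
def NN (e : ℤ) (lowInc upInc : Bool) : Set (A → ℤ) :=
  { σ | σ ∈ N n k x i ℓ e ∧
      (∀ a : A, σ a = lowPos i ℓ e → (Incomp a (x ℓ) ↔ lowInc = true)) ∧
      (∀ a : A, σ a = highPos i ℓ e → (Incomp a (x ℓ) ↔ upInc = true)) }

/-- `x_r < w`, for `r ∈ {0,…,k+1}`, with the convention that `x_0` is below every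
element of `ᾱ` (and `x_{k+1}` above, so that `x_{k+1} < w` never holds). -/
def gtX (r : ℤ) (w : A) : Prop := r = 0 ∨ (1 ≤ r ∧ r ≤ (k : ℤ) ∧ x r < w)

/-- `w < x_s`, with the convention that `x_{k+1}` is above every element of `ᾱ`. -/
def ltX (s : ℤ) (w : A) : Prop := s = (k : ℤ) + 1 ∨ (1 ≤ s ∧ s ≤ (k : ℤ) ∧ w < x s)

/-- `x_r ≤ w`, with the same conventions. -/
def geX (r : ℤ) (w : A) : Prop := r = 0 ∨ (1 ≤ r ∧ r ≤ (k : ℤ) ∧ x r ≤ w)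

/-- `w ≤ x_s`, with the same conventions. -/
def leX (s : ℤ) (w : A) : Prop := s = (k : ℤ) + 1 ∨ (1 ≤ s ∧ s ≤ (k : ℤ) ∧ w ≤ x s)

/-- `ᾱ_{>x_r,<x_s}`. -/
def betw (r s : ℤ) : Set A := { w | gtX k x r w ∧ ltX k x s w }

/-- `ᾱ_{≥x_r,≤x_s}` (only genuine elements of `ᾱ`; the adjoined `x_0, x_{k+1}` are
never elements). -/
def betwIcc (r s : ℤ) : Set A := { w | geX k x r w ∧ leX k x s w }

/-- `α = {y_1,…,y_{n-k}}` : the complement of the chain `x_1 < ⋯ < x_k` in `ᾱ`. -/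
def alphaSet : Set A := { a | ∀ j : ℤ, 1 ≤ j → j ≤ (k : ℤ) → a ≠ x j }

/-- `α_{>x_r,<x_s}`. -/
def betwA (r s : ℤ) : Set A := { w | w ∈ alphaSet k x ∧ gtX k x r w ∧ ltX k x s w }

/-- `β_m := α \ (α_{<x_m} ∪ α_{>x_{m+1}})` for `m ∈ {0,…,k}`, and `β_m := ∅`
otherwise. -/
def beta (m : ℤ) : Set A :=
  { a | (0 ≤ m ∧ m ≤ (k : ℤ)) ∧ a ∈ alphaSet k x ∧ ¬ ltX k x m a ∧ ¬ gtX k x (m + 1) a }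

/-- A *splitting pair* `(r,s)` : `0 ≤ r+1 < s ≤ k+1` and `(r+1,s) ≠ (0,k+1)`. -/
def SplitPair (r s : ℤ) : Prop :=
  0 ≤ r + 1 ∧ r + 1 < s ∧ s ≤ (k : ℤ) + 1 ∧ ¬(r + 1 = 0 ∧ s = (k : ℤ) + 1)

/-- The combinatorial (super)criticality condition of Definition 2.9 of the paper:
for every `p ≥ 1` and every admissible sequence `j_0 = -1 < j_1 < ⋯ < j_p < k+1 = j_{p+1}`,
`Σ_q [j_q+1 < j_{q+1}]·|ᾱ_{>x_{j_q+1},<x_{j_{q+1}}}|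
  ≤ |{q ∈ [p] : j_q ∈ {ℓ-1,ℓ}}| - c + Σ_q [j_q+1 < j_{q+1}]·(i_{j_{q+1}} - i_{j_q+1} - 1)`.
`c = 2` gives supercriticality, `c = 1` criticality. -/
def CritCond (c : ℤ) : Prop :=
  ∀ p : ℕ, 1 ≤ p → ∀ j : ℕ → ℤ,
    j 0 = -1 → j (p + 1) = (k : ℤ) + 1 →
    (∀ q : ℕ, q ≤ p → j q < j (q + 1)) →
    (∀ q : ℕ, 1 ≤ q → q ≤ p →
        0 < i (j q + 1) - i (j q) - 1 - (if j q = ℓ - 1 ∨ j q = ℓ then 1 else 0)) →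
    (∑ q ∈ Finset.range (p + 1),
        if j q + 1 < j (q + 1) then ((betw k x (j q + 1) (j (q + 1))).ncard : ℤ) else 0)
      ≤ (((Finset.Icc 1 p).filter fun q => j q = ℓ - 1 ∨ j q = ℓ).card : ℤ) - c
        + ∑ q ∈ Finset.range (p + 1),
            (if j q + 1 < j (q + 1) then i (j (q + 1)) - i (j q + 1) - 1 else 0)

/-- The poset `ᾱ` is *supercritical*. -/
def Supercritical : Prop := 0 < (N n k x i ℓ 0).ncard ∧ CritCond k x i ℓ 2

/-- The poset `ᾱ` is *critical*. -/
def Critical : Prop := 0 < (N n k x i ℓ 0).ncard ∧ CritCond k x i ℓ 1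

/-- The order polytope `O_β ⊆ ℝ^α ⊆ ℝ^ᾱ` of `β ⊆ α` (coordinates outside `β` vanish). -/
def orderPolytope (β : Set A) : Set (A → ℝ) :=
  { t | (∀ a : A, a ∉ β → t a = 0) ∧ (∀ a ∈ β, 0 ≤ t a ∧ t a ≤ 1) ∧
      ∀ a b : A, a ∈ β → b ∈ β → a ≤ b → t a ≤ t b }

/-- The polytope `K_m = {t ∈ O_α : t_j = 0 if y_j < x_m, t_j = 1 if y_j > x_{m+1}}`. -/
def Kpoly (m : ℤ) : Set (A → ℝ) :=
  { t | t ∈ orderPolytope (alphaSet k x) ∧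
      (∀ a ∈ alphaSet k x, ltX k x m a → t a = 0) ∧
      (∀ a ∈ alphaSet k x, gtX k x (m + 1) a → t a = 1) }

end PosetDefs

/-- The standing hypotheses: `ᾱ` is a poset with `n` elements containing the chain
`x_1 < ⋯ < x_k`, `0 = i_0 < 1 ≤ i_1 < ⋯ < i_k ≤ n < n+1 = i_{k+1}`, `ℓ ∈ [k]`, and
`i_{ℓ-1} + 1 < i_ℓ < i_{ℓ+1} - 1`. -/
structure Setup [PartialOrder A] [Fintype A] (n k : ℕ) (x : ℤ → A) (i : ℤ → ℤ)
    (ℓ : ℤ) : Prop where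
  hk1 : 1 ≤ k
  hkn : k ≤ n
  hcard : Fintype.card A = n
  hchain : ∀ j j' : ℤ, 1 ≤ j → j < j' → j' ≤ (k : ℤ) → x j < x j'
  hi0 : i 0 = 0
  hitop : i ((k : ℤ) + 1) = (n : ℤ) + 1
  himono : ∀ j j' : ℤ, 1 ≤ j → j < j' → j' ≤ (k : ℤ) → i j < i j'
  hi1 : 1 ≤ i 1
  hik : i (k : ℤ) ≤ (n : ℤ)
  hl1 : 1 ≤ ℓ
  hlk : ℓ ≤ (k : ℤ)
  hgap1 : i (ℓ - 1) + 1 < i ℓ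
  hgap2 : i ℓ + 1 < i (ℓ + 1)



section Aux

variable {A : Type*} [PartialOrder A] [Fintype A] {n k : ℕ} {x : ℤ → A} {i : ℤ → ℤ} {ℓ : ℤ}

lemma lowPos_neg : lowPos i ℓ (-1) = i ℓ := if_pos rfl
lemma lowPos_zero : lowPos i ℓ 0 = i ℓ - 1 := if_neg (by norm_num)
lemma lowPos_one : lowPos i ℓ 1 = i ℓ - 1 := if_neg (by norm_num)
lemma highPos_neg : highPos i ℓ (-1) = i ℓ + 1 := if_neg (by norm_num)
lemma highPos_zero : highPos i ℓ 0 = i ℓ + 1 := if_neg (by norm_num)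
lemma highPos_one : highPos i ℓ 1 = i ℓ := if_pos rfl

lemma Setup.i_le (hs : Setup n k x i ℓ) {j j' : ℤ} (h1 : 1 ≤ j) (hle : j ≤ j')
    (h2 : j' ≤ (k : ℤ)) : i j ≤ i j' := by
  rcases eq_or_lt_of_le hle with rfl | h
  · exact le_rfl
  · exact (hs.himono _ _ h1 h h2).le

/-- key position facts: `2 ≤ i ℓ`, `i ℓ + 1 ≤ n`, and for `j ≠ ℓ` the position
`i j` is outside the window `[i ℓ - 1, i ℓ + 1]`. -/
lemma Setup.key (hs : Setup n k x i ℓ) :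
    2 ≤ i ℓ ∧ i ℓ + 1 ≤ (n : ℤ) ∧
      (∀ j : ℤ, 1 ≤ j → j ≤ (k : ℤ) → j ≠ ℓ → i j < i ℓ - 1 ∨ i ℓ + 1 < i j) := by
  have hl1 := hs.hl1
  have hlk := hs.hlk
  have hgap1 := hs.hgap1
  have hgap2 := hs.hgap2
  have hik := hs.hik
  have hi1 := hs.hi1
  have hi0 := hs.hi0
  have h0 : 0 ≤ i (ℓ - 1) := by
    rcases eq_or_lt_of_le hl1 with h | h
    · rw [← h]; norm_num [hi0]
    · have h1 : (1 : ℤ) ≤ ℓ - 1 := by omega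
      have := hs.i_le (le_refl 1) h1 (by omega)
      linarith
  have hm2 : 2 ≤ i ℓ := by linarith
  have hup : i ℓ + 1 ≤ (n : ℤ) := by
    have h1 : i (ℓ + 1) ≤ (n : ℤ) + 1 := by
      rcases eq_or_lt_of_le hlk with h | h
      · rw [h, hs.hitop]
      · have := hs.i_le (by omega : (1:ℤ) ≤ ℓ + 1) (by omega : ℓ + 1 ≤ (k:ℤ)) le_rfl
        linarith
    linarith
  refine ⟨hm2, hup, fun j h1 h2 hne => ?_⟩
  rcases lt_or_gt_of_ne hne with h | h
  · left
    have : i j ≤ i (ℓ - 1) := hs.i_le h1 (by omega) (by omega)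
    linarith
  · right
    have : i (ℓ + 1) ≤ i j := hs.i_le (by omega) (by omega) h2
    linarith

lemma IsLinExt.strict {σ : A → ℤ} (h : IsLinExt n σ) {w z : A} (hwz : w < z) :
    σ w < σ z :=
  lt_of_le_of_ne (h.2.2 _ _ hwz.le) fun hh => hwz.ne (h.1 hh)

lemma IsLinExt.surj (hcard : Fintype.card A = n) {σ : A → ℤ} (h : IsLinExt n σ)
    {p : ℤ} (h1 : 1 ≤ p) (h2 : p ≤ (n : ℤ)) : ∃ a, σ a = p := by
  classical
  have hsub : Finset.image σ Finset.univ ⊆ Finset.Icc 1 (n : ℤ) := by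
    intro v hv
    simp only [Finset.mem_image] at hv
    obtain ⟨a, -, rfl⟩ := hv
    exact Finset.mem_Icc.2 ⟨(h.2.1 a).1, (h.2.1 a).2⟩
  have hcardIcc : (Finset.Icc 1 (n : ℤ)).card = n := by
    rw [Int.card_Icc]; omega
  have hcardim : (Finset.image σ Finset.univ).card = n := by
    rw [Finset.card_image_of_injective _ h.1, Finset.card_univ, hcard]
  have heq : Finset.image σ Finset.univ = Finset.Icc 1 (n : ℤ) :=
    Finset.eq_of_subset_of_card_le hsub (by omega)
  have : p ∈ Finset.image σ Finset.univ := by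
    rw [heq]; exact Finset.mem_Icc.2 ⟨h1, h2⟩
  simpa using this

lemma N_finite (e : ℤ) : (N n k x i ℓ e).Finite := by
  apply Set.Finite.subset (Set.Finite.pi (fun _ : A => Set.finite_Icc (1 : ℤ) (n : ℤ)))
  intro σ hσ
  simp only [Set.mem_pi, Set.mem_univ, forall_true_left, Set.mem_Icc]
  exact fun a => ⟨(hσ.1.2.1 a).1, (hσ.1.2.1 a).2⟩

lemma NN_subset_N (e : ℤ) (L U : Bool) : NN n k x i ℓ e L U ⊆ N n k x i ℓ e :=
  fun _ h => h.1

lemma NN_finite (e : ℤ) (L U : Bool) : (NN n k x i ℓ e L U).Finite :=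
  (N_finite e).subset (NN_subset_N e L U)

lemma comp_above {σ : A → ℤ} (h : IsLinExt n σ) {a : A} (hn : ¬ Incomp a (x ℓ))
    (hlt : σ (x ℓ) < σ a) : x ℓ ≤ a := by
  by_cases h1 : x ℓ ≤ a
  · exact h1
  by_cases h2 : a ≤ x ℓ
  · exact absurd (h.2.2 _ _ h2) (by omega)
  · exact absurd ⟨h2, h1⟩ hn

lemma comp_below {σ : A → ℤ} (h : IsLinExt n σ) {a : A} (hn : ¬ Incomp a (x ℓ))
    (hlt : σ a < σ (x ℓ)) : a ≤ x ℓ := by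
  by_cases h2 : a ≤ x ℓ
  · exact h2
  by_cases h1 : x ℓ ≤ a
  · exact absurd (h.2.2 _ _ h1) (by omega)
  · exact absurd ⟨h2, h1⟩ hn

/-- Generic relabelling lemma: composing a linear extension with a permutation-like
map of `ℤ` which fixes everything outside the window `[i ℓ - 1, i ℓ + 1]` and keeps
the window inside itself produces an element of `N_(e')` provided monotonicity holds. -/
lemma relabel_mem_N (hs : Setup n k x i ℓ) {e e' : ℤ} (c : ℤ → ℤ)
    (hinj : Function.Injective c)
    (hfix : ∀ v, v < i ℓ - 1 ∨ i ℓ + 1 < v → c v = v)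
    (hband : ∀ v, i ℓ - 1 ≤ v → v ≤ i ℓ + 1 → i ℓ - 1 ≤ c v ∧ c v ≤ i ℓ + 1)
    {σ : A → ℤ} (hσ : σ ∈ N n k x i ℓ e)
    (hmono : ∀ w z : A, w < z → c (σ w) ≤ c (σ z))
    (hxl : c (i ℓ + e) = i ℓ + e') :
    (fun a => c (σ a)) ∈ N n k x i ℓ e' := by
  obtain ⟨⟨hinjσ, hrange, hmon⟩, hfixj, hxe⟩ := hσ
  obtain ⟨hk1, hk2, hk3⟩ := hs.key
  refine ⟨⟨hinj.comp hinjσ, ?_, ?_⟩, ?_, ?_⟩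
  · intro a
    by_cases h : i ℓ - 1 ≤ σ a ∧ σ a ≤ i ℓ + 1
    · have := hband _ h.1 h.2
      constructor <;> simp only [Function.comp] <;> omega
    · have hout : σ a < i ℓ - 1 ∨ i ℓ + 1 < σ a := by omega
      simp only [Function.comp, hfix _ hout]
      exact hrange a
  · intro w z hwz
    rcases eq_or_lt_of_le hwz with rfl | h
    · exact le_rfl
    · exact hmono _ _ h
  · intro j h1 h2 hne
    simp only
    rw [hfixj j h1 h2 hne]
    exact hfix _ (hk3 j h1 h2 hne)
  · simp only
    rw [hxe]
    exact hxl

/-- swap of positions `p, p+1`. -/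
def sw (p v : ℤ) : ℤ := if v = p then p + 1 else if v = p + 1 then p else v

/-- 3-cycle `m-1 ↦ m ↦ m+1 ↦ m-1`. -/
def cu (m v : ℤ) : ℤ :=
  if v = m - 1 then m else if v = m then m + 1 else if v = m + 1 then m - 1 else v

/-- 3-cycle `m+1 ↦ m ↦ m-1 ↦ m+1`. -/
def cd (m v : ℤ) : ℤ :=
  if v = m + 1 then m else if v = m then m - 1 else if v = m - 1 then m + 1 else v

lemma sw_inj (p : ℤ) : Function.Injective (sw p) := by
  intro u v h; unfold sw at h; split_ifs at h <;> omega

lemma cu_inj (m : ℤ) : Function.Injective (cu m) := by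
  intro u v h; unfold cu at h; split_ifs at h <;> omega

lemma cd_inj (m : ℤ) : Function.Injective (cd m) := by
  intro u v h; unfold cd at h; split_ifs at h <;> omega

lemma mapapply_inj {c : ℤ → ℤ} (hc : Function.Injective c) :
    Function.Injective (fun σ : A → ℤ => fun a => c (σ a)) :=
  fun _ _ h => funext fun a => hc (congrFun h a)

lemma ncard_le_of_mapsTo {s t : Set (A → ℤ)} (f : (A → ℤ) → (A → ℤ))
    (hinj : Function.Injective f) (hmaps : Set.MapsTo f s t) (ht : t.Finite) :
    s.ncard ≤ t.ncard := by
  calc s.ncard = (f '' s).ncard := (Set.ncard_image_of_injective s hinj).symm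
    _ ≤ t.ncard := Set.ncard_le_ncard hmaps.image_subset ht

/-- swap at `(iℓ-1, iℓ)` : `N₋(≁,∗) → N₌(≁,∗)`. -/
lemma mapsTo_A1 (hs : Setup n k x i ℓ) (z : Bool) :
    Set.MapsTo (fun σ : A → ℤ => fun a => sw (i ℓ - 1) (σ a))
      (NN n k x i ℓ (-1) true z) (NN n k x i ℓ 0 true z) := by
  intro σ hσ
  obtain ⟨hN, hlow, hhigh⟩ := hσ
  have hxe : σ (x ℓ) = i ℓ - 1 := by rw [hN.2.2]; ring
  have hlow' : ∀ a, σ a = i ℓ → Incomp a (x ℓ) := fun a ha =>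
    (hlow a (by rw [lowPos_neg]; exact ha)).2 rfl
  have hmono : ∀ w z' : A, w < z' → sw (i ℓ - 1) (σ w) ≤ sw (i ℓ - 1) (σ z') := by
    intro w z' hwz
    have h1 : σ w < σ z' := hN.1.strict hwz
    by_cases hb : σ w = i ℓ - 1 ∧ σ z' = i ℓ
    · exfalso
      have hw : w = x ℓ := hN.1.1 (hb.1.trans hxe.symm)
      exact (hlow' z' hb.2).2 (hw ▸ hwz.le)
    · unfold sw; split_ifs <;> omega
  refine ⟨relabel_mem_N hs _ (sw_inj _) ?_ ?_ hN hmono ?_, ?_, ?_⟩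
  · intro v hv; unfold sw; split_ifs <;> omega
  · intro v h1 h2; unfold sw
    refine ⟨?_, ?_⟩ <;> split_ifs <;> omega
  · unfold sw; split_ifs <;> omega
  · intro a ha
    rw [lowPos_zero] at ha
    have ha' : σ a = i ℓ := by
      simp only at ha; unfold sw at ha; split_ifs at ha <;> omega
    exact hlow a (by rw [lowPos_neg]; exact ha')
  · intro a ha
    rw [highPos_zero] at ha
    have ha' : σ a = i ℓ + 1 := by
      simp only at ha; unfold sw at ha; split_ifs at ha <;> omega
    exact hhigh a (by rw [highPos_neg]; exact ha')

/-- swap at `(iℓ-1, iℓ)` : `N₌(≁,∗) → N₋(≁,∗)`. -/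
lemma mapsTo_A2 (hs : Setup n k x i ℓ) (z : Bool) :
    Set.MapsTo (fun σ : A → ℤ => fun a => sw (i ℓ - 1) (σ a))
      (NN n k x i ℓ 0 true z) (NN n k x i ℓ (-1) true z) := by
  intro σ hσ
  obtain ⟨hN, hlow, hhigh⟩ := hσ
  have hxe : σ (x ℓ) = i ℓ := by rw [hN.2.2]; ring
  have hlow' : ∀ a, σ a = i ℓ - 1 → Incomp a (x ℓ) := fun a ha =>
    (hlow a (by rw [lowPos_zero]; exact ha)).2 rfl
  have hmono : ∀ w z' : A, w < z' → sw (i ℓ - 1) (σ w) ≤ sw (i ℓ - 1) (σ z') := by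
    intro w z' hwz
    have h1 : σ w < σ z' := hN.1.strict hwz
    by_cases hb : σ w = i ℓ - 1 ∧ σ z' = i ℓ
    · exfalso
      have hz : z' = x ℓ := hN.1.1 (hb.2.trans hxe.symm)
      exact (hlow' w hb.1).1 (hz ▸ hwz.le)
    · unfold sw; split_ifs <;> omega
  refine ⟨relabel_mem_N hs _ (sw_inj _) ?_ ?_ hN hmono ?_, ?_, ?_⟩
  · intro v hv; unfold sw; split_ifs <;> omega
  · intro v h1 h2; unfold sw
    refine ⟨?_, ?_⟩ <;> split_ifs <;> omega
  · unfold sw; split_ifs <;> omega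
  · intro a ha
    rw [lowPos_neg] at ha
    have ha' : σ a = i ℓ - 1 := by
      simp only at ha; unfold sw at ha; split_ifs at ha <;> omega
    exact hlow a (by rw [lowPos_zero]; exact ha')
  · intro a ha
    rw [highPos_neg] at ha
    have ha' : σ a = i ℓ + 1 := by
      simp only at ha; unfold sw at ha; split_ifs at ha <;> omega
    exact hhigh a (by rw [highPos_zero]; exact ha')

/-- swap at `(iℓ, iℓ+1)` : `N₊(∗,≁) → N₌(∗,≁)`. -/
lemma mapsTo_B1 (hs : Setup n k x i ℓ) (z : Bool) :
    Set.MapsTo (fun σ : A → ℤ => fun a => sw (i ℓ) (σ a))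
      (NN n k x i ℓ 1 z true) (NN n k x i ℓ 0 z true) := by
  intro σ hσ
  obtain ⟨hN, hlow, hhigh⟩ := hσ
  have hxe : σ (x ℓ) = i ℓ + 1 := hN.2.2
  have hhigh' : ∀ a, σ a = i ℓ → Incomp a (x ℓ) := fun a ha =>
    (hhigh a (by rw [highPos_one]; exact ha)).2 rfl
  have hmono : ∀ w z' : A, w < z' → sw (i ℓ) (σ w) ≤ sw (i ℓ) (σ z') := by
    intro w z' hwz
    have h1 : σ w < σ z' := hN.1.strict hwz
    by_cases hb : σ w = i ℓ ∧ σ z' = i ℓ + 1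
    · exfalso
      have hz : z' = x ℓ := hN.1.1 (hb.2.trans hxe.symm)
      exact (hhigh' w hb.1).1 (hz ▸ hwz.le)
    · unfold sw; split_ifs <;> omega
  refine ⟨relabel_mem_N hs _ (sw_inj _) ?_ ?_ hN hmono ?_, ?_, ?_⟩
  · intro v hv; unfold sw; split_ifs <;> omega
  · intro v h1 h2; unfold sw
    refine ⟨?_, ?_⟩ <;> split_ifs <;> omega
  · unfold sw; split_ifs <;> omega
  · intro a ha
    rw [lowPos_zero] at ha
    have ha' : σ a = i ℓ - 1 := by
      simp only at ha; unfold sw at ha; split_ifs at ha <;> omega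
    exact hlow a (by rw [lowPos_one]; exact ha')
  · intro a ha
    rw [highPos_zero] at ha
    have ha' : σ a = i ℓ := by
      simp only at ha; unfold sw at ha; split_ifs at ha <;> omega
    exact hhigh a (by rw [highPos_one]; exact ha')

/-- swap at `(iℓ, iℓ+1)` : `N₌(∗,≁) → N₊(∗,≁)`. -/
lemma mapsTo_B2 (hs : Setup n k x i ℓ) (z : Bool) :
    Set.MapsTo (fun σ : A → ℤ => fun a => sw (i ℓ) (σ a))
      (NN n k x i ℓ 0 z true) (NN n k x i ℓ 1 z true) := by
  intro σ hσ
  obtain ⟨hN, hlow, hhigh⟩ := hσ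
  have hxe : σ (x ℓ) = i ℓ := by rw [hN.2.2]; ring
  have hhigh' : ∀ a, σ a = i ℓ + 1 → Incomp a (x ℓ) := fun a ha =>
    (hhigh a (by rw [highPos_zero]; exact ha)).2 rfl
  have hmono : ∀ w z' : A, w < z' → sw (i ℓ) (σ w) ≤ sw (i ℓ) (σ z') := by
    intro w z' hwz
    have h1 : σ w < σ z' := hN.1.strict hwz
    by_cases hb : σ w = i ℓ ∧ σ z' = i ℓ + 1
    · exfalso
      have hw : w = x ℓ := hN.1.1 (hb.1.trans hxe.symm)
      exact (hhigh' z' hb.2).2 (hw ▸ hwz.le)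
    · unfold sw; split_ifs <;> omega
  refine ⟨relabel_mem_N hs _ (sw_inj _) ?_ ?_ hN hmono ?_, ?_, ?_⟩
  · intro v hv; unfold sw; split_ifs <;> omega
  · intro v h1 h2; unfold sw
    refine ⟨?_, ?_⟩ <;> split_ifs <;> omega
  · unfold sw; split_ifs <;> omega
  · intro a ha
    rw [lowPos_one] at ha
    have ha' : σ a = i ℓ - 1 := by
      simp only at ha; unfold sw at ha; split_ifs at ha <;> omega
    exact hlow a (by rw [lowPos_zero]; exact ha')
  · intro a ha
    rw [highPos_one] at ha
    have ha' : σ a = i ℓ + 1 := by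
      simp only at ha; unfold sw at ha; split_ifs at ha <;> omega
    exact hhigh a (by rw [highPos_zero]; exact ha')

/-- 3-cycle : `N₋(∼,≁) → N₌(≁,∼)`. -/
lemma mapsTo_C1 (hs : Setup n k x i ℓ) :
    Set.MapsTo (fun σ : A → ℤ => fun a => cu (i ℓ) (σ a))
      (NN n k x i ℓ (-1) false true) (NN n k x i ℓ 0 true false) := by
  intro σ hσ
  obtain ⟨hN, hlow, hhigh⟩ := hσ
  have hxe : σ (x ℓ) = i ℓ - 1 := by rw [hN.2.2]; ring
  have hlowC : ∀ a, σ a = i ℓ → ¬ Incomp a (x ℓ) := fun a ha hI => by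
    simpa using (hlow a (by rw [lowPos_neg]; exact ha)).1 hI
  have hhighC : ∀ a, σ a = i ℓ + 1 → Incomp a (x ℓ) := fun a ha =>
    (hhigh a (by rw [highPos_neg]; exact ha)).2 rfl
  have hmono : ∀ w z' : A, w < z' → cu (i ℓ) (σ w) ≤ cu (i ℓ) (σ z') := by
    intro w z' hwz
    have h1 : σ w < σ z' := hN.1.strict hwz
    by_cases hb : σ z' = i ℓ + 1 ∧ i ℓ - 1 ≤ σ w
    · exfalso
      have hIz := hhighC z' hb.1
      rcases (by omega : σ w = i ℓ - 1 ∨ σ w = i ℓ) with hw | hw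
      · have hwx : w = x ℓ := hN.1.1 (hw.trans hxe.symm)
        exact hIz.2 (hwx ▸ hwz.le)
      · have hcw : x ℓ ≤ w := comp_above hN.1 (hlowC w hw) (by omega)
        exact hIz.2 (hcw.trans hwz.le)
    · unfold cu; split_ifs <;> omega
  refine ⟨relabel_mem_N hs _ (cu_inj _) ?_ ?_ hN hmono ?_, ?_, ?_⟩
  · intro v hv; unfold cu; split_ifs <;> omega
  · intro v h1 h2; unfold cu
    refine ⟨?_, ?_⟩ <;> split_ifs <;> omega
  · unfold cu; split_ifs <;> omega
  · intro a ha
    rw [lowPos_zero] at ha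
    have ha' : σ a = i ℓ + 1 := by
      simp only at ha; unfold cu at ha; split_ifs at ha <;> omega
    exact iff_of_true (hhighC a ha') rfl
  · intro a ha
    rw [highPos_zero] at ha
    have ha' : σ a = i ℓ := by
      simp only at ha; unfold cu at ha; split_ifs at ha <;> omega
    exact iff_of_false (hlowC a ha') Bool.false_ne_true

/-- 3-cycle : `N₊(≁,∼) → N₌(∼,≁)`. -/
lemma mapsTo_C2 (hs : Setup n k x i ℓ) :
    Set.MapsTo (fun σ : A → ℤ => fun a => cd (i ℓ) (σ a))
      (NN n k x i ℓ 1 true false) (NN n k x i ℓ 0 false true) := by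
  intro σ hσ
  obtain ⟨hN, hlow, hhigh⟩ := hσ
  have hxe : σ (x ℓ) = i ℓ + 1 := hN.2.2
  have hlowC : ∀ a, σ a = i ℓ - 1 → Incomp a (x ℓ) := fun a ha =>
    (hlow a (by rw [lowPos_one]; exact ha)).2 rfl
  have hhighC : ∀ a, σ a = i ℓ → ¬ Incomp a (x ℓ) := fun a ha hI => by
    simpa using (hhigh a (by rw [highPos_one]; exact ha)).1 hI
  have hmono : ∀ w z' : A, w < z' → cd (i ℓ) (σ w) ≤ cd (i ℓ) (σ z') := by
    intro w z' hwz
    have h1 : σ w < σ z' := hN.1.strict hwz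
    by_cases hb : σ w = i ℓ - 1 ∧ σ z' ≤ i ℓ + 1
    · exfalso
      have hIw := hlowC w hb.1
      rcases (by omega : σ z' = i ℓ + 1 ∨ σ z' = i ℓ) with hz | hz
      · have hzx : z' = x ℓ := hN.1.1 (hz.trans hxe.symm)
        exact hIw.1 (hzx ▸ hwz.le)
      · have hcz : z' ≤ x ℓ := comp_below hN.1 (hhighC z' hz) (by omega)
        exact hIw.1 (hwz.le.trans hcz)
    · unfold cd; split_ifs <;> omega
  refine ⟨relabel_mem_N hs _ (cd_inj _) ?_ ?_ hN hmono ?_, ?_, ?_⟩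
  · intro v hv; unfold cd; split_ifs <;> omega
  · intro v h1 h2; unfold cd
    refine ⟨?_, ?_⟩ <;> split_ifs <;> omega
  · unfold cd; split_ifs <;> omega
  · intro a ha
    rw [lowPos_zero] at ha
    have ha' : σ a = i ℓ := by
      simp only at ha; unfold cd at ha; split_ifs at ha <;> omega
    exact iff_of_false (hhighC a ha') Bool.false_ne_true
  · intro a ha
    rw [highPos_zero] at ha
    have ha' : σ a = i ℓ - 1 := by
      simp only at ha; unfold cd at ha; split_ifs at ha <;> omega
    exact iff_of_true (hlowC a ha') rfl

lemma pos_bounds (hs : Setup n k x i ℓ) {e : ℤ} (he : e = -1 ∨ e = 0 ∨ e = 1) :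
    (1 ≤ lowPos i ℓ e ∧ lowPos i ℓ e ≤ (n : ℤ)) ∧
      (1 ≤ highPos i ℓ e ∧ highPos i ℓ e ≤ (n : ℤ)) := by
  obtain ⟨hk1, hk2, -⟩ := hs.key
  rcases he with rfl | rfl | rfl
  · rw [lowPos_neg, highPos_neg]; omega
  · rw [lowPos_zero, highPos_zero]; omega
  · rw [lowPos_one, highPos_one]; omega

/-- Classification: the unique class of `σ ∈ N_e` is determined. -/
lemma NN_unique (hs : Setup n k x i ℓ) {e : ℤ} (he : e = -1 ∨ e = 0 ∨ e = 1)
    {σ : A → ℤ} {L U L' U' : Bool} (h1 : σ ∈ NN n k x i ℓ e L U)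
    (h2 : σ ∈ NN n k x i ℓ e L' U') : L = L' ∧ U = U' := by
  obtain ⟨⟨hl1, hl2⟩, ⟨hh1, hh2⟩⟩ := pos_bounds hs he
  obtain ⟨a, ha⟩ := h1.1.1.surj hs.hcard hl1 hl2
  obtain ⟨b, hb⟩ := h1.1.1.surj hs.hcard hh1 hh2
  constructor
  · have := ((h1.2.1 a ha).symm.trans (h2.2.1 a ha))
    cases L <;> cases L' <;> simp_all
  · have := ((h1.2.2 b hb).symm.trans (h2.2.2 b hb))
    cases U <;> cases U' <;> simp_all

lemma NN_disjoint (hs : Setup n k x i ℓ) {e : ℤ} (he : e = -1 ∨ e = 0 ∨ e = 1)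
    {L U L' U' : Bool} (hne : L ≠ L' ∨ U ≠ U') :
    Disjoint (NN n k x i ℓ e L U) (NN n k x i ℓ e L' U') := by
  rw [Set.disjoint_left]
  intro σ hσ1 hσ2
  obtain ⟨hL, hU⟩ := NN_unique hs he hσ1 hσ2
  tauto

lemma N_eq_union (hs : Setup n k x i ℓ) {e : ℤ} (he : e = -1 ∨ e = 0 ∨ e = 1) :
    N n k x i ℓ e =
      (NN n k x i ℓ e true true ∪ NN n k x i ℓ e true false) ∪
        (NN n k x i ℓ e false true ∪ NN n k x i ℓ e false false) := by
  classical
  ext σ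
  constructor
  · intro hσ
    obtain ⟨⟨hl1, hl2⟩, ⟨hh1, hh2⟩⟩ := pos_bounds hs he
    obtain ⟨a, ha⟩ := hσ.1.surj hs.hcard hl1 hl2
    obtain ⟨b, hb⟩ := hσ.1.surj hs.hcard hh1 hh2
    have hua : ∀ a', σ a' = lowPos i ℓ e → a' = a := fun a' ha' =>
      hσ.1.1 (ha'.trans ha.symm)
    have hub : ∀ b', σ b' = highPos i ℓ e → b' = b := fun b' hb' =>
      hσ.1.1 (hb'.trans hb.symm)
    by_cases hIa : Incomp a (x ℓ) <;> by_cases hIb : Incomp b (x ℓ)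
    · exact Or.inl (Or.inl ⟨hσ, fun a' ha' => by rw [hua a' ha']; simp [hIa],
        fun b' hb' => by rw [hub b' hb']; simp [hIb]⟩)
    · exact Or.inl (Or.inr ⟨hσ, fun a' ha' => by rw [hua a' ha']; simp [hIa],
        fun b' hb' => by rw [hub b' hb']; simp [hIb]⟩)
    · exact Or.inr (Or.inl ⟨hσ, fun a' ha' => by rw [hua a' ha']; simp [hIa],
        fun b' hb' => by rw [hub b' hb']; simp [hIb]⟩)
    · exact Or.inr (Or.inr ⟨hσ, fun a' ha' => by rw [hua a' ha']; simp [hIa],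
        fun b' hb' => by rw [hub b' hb']; simp [hIb]⟩)
  · rintro ((h | h) | (h | h)) <;> exact h.1

lemma N_ncard_split (hs : Setup n k x i ℓ) {e : ℤ} (he : e = -1 ∨ e = 0 ∨ e = 1) :
    (N n k x i ℓ e).ncard =
      (NN n k x i ℓ e true true).ncard + (NN n k x i ℓ e true false).ncard +
        ((NN n k x i ℓ e false true).ncard + (NN n k x i ℓ e false false).ncard) := by
  rw [N_eq_union hs he]
  rw [Set.ncard_union_eq ?d1 ((NN_finite _ _ _).union (NN_finite _ _ _))
      ((NN_finite _ _ _).union (NN_finite _ _ _))]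
  · rw [Set.ncard_union_eq (NN_disjoint hs he (by simp)) (NN_finite _ _ _) (NN_finite _ _ _),
      Set.ncard_union_eq (NN_disjoint hs he (by simp)) (NN_finite _ _ _) (NN_finite _ _ _)]
  case d1 =>
    refine Set.disjoint_union_left.2 ⟨?_, ?_⟩ <;>
      refine Set.disjoint_union_right.2 ⟨?_, ?_⟩ <;>
        exact NN_disjoint hs he (by simp)

lemma NN_ncard_eq_A (hs : Setup n k x i ℓ) (z : Bool) :
    (NN n k x i ℓ (-1) true z).ncard = (NN n k x i ℓ 0 true z).ncard :=
  le_antisymm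
    (ncard_le_of_mapsTo _ (mapapply_inj (sw_inj _)) (mapsTo_A1 hs z) (NN_finite _ _ _))
    (ncard_le_of_mapsTo _ (mapapply_inj (sw_inj _)) (mapsTo_A2 hs z) (NN_finite _ _ _))

lemma NN_ncard_eq_B (hs : Setup n k x i ℓ) (z : Bool) :
    (NN n k x i ℓ 1 z true).ncard = (NN n k x i ℓ 0 z true).ncard :=
  le_antisymm
    (ncard_le_of_mapsTo _ (mapapply_inj (sw_inj _)) (mapsTo_B1 hs z) (NN_finite _ _ _))
    (ncard_le_of_mapsTo _ (mapapply_inj (sw_inj _)) (mapsTo_B2 hs z) (NN_finite _ _ _))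

lemma NN_ncard_le_C1 (hs : Setup n k x i ℓ) :
    (NN n k x i ℓ (-1) false true).ncard ≤ (NN n k x i ℓ 0 true false).ncard :=
  ncard_le_of_mapsTo _ (mapapply_inj (cu_inj _)) (mapsTo_C1 hs) (NN_finite _ _ _)

lemma NN_ncard_le_C2 (hs : Setup n k x i ℓ) :
    (NN n k x i ℓ 1 true false).ncard ≤ (NN n k x i ℓ 0 false true).ncard :=
  ncard_le_of_mapsTo _ (mapapply_inj (cd_inj _)) (mapsTo_C2 hs) (NN_finite _ _ _)

end Aux

/-- **Reduction of the critical extremal condition** (Lemma 3.3(b)).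
Assume `|N₌|² = |N₋|·|N₊|`. Then the critical companion condition (at least one
incomparable companion in every linear extension, together with the counting
conditions with constants `N₁, N₂`) holds if and only if
`|N₋(∼,∼)| = |N₊(∼,∼)| = 0`. -/
theorem critical_reduction
    {A : Type*} [PartialOrder A] [Fintype A]
    (n k : ℕ) (x : ℤ → A) (i : ℤ → ℤ) (ℓ : ℤ)
    (hsetup : Setup n k x i ℓ)
    (heq : (N n k x i ℓ 0).ncard ^ 2 = (N n k x i ℓ (-1)).ncard * (N n k x i ℓ 1).ncard) :
    ((∀ e : ℤ, (e = -1 ∨ e = 0 ∨ e = 1) → ∀ σ ∈ N n k x i ℓ e, ∀ a b : A,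
          σ a = lowPos i ℓ e → σ b = highPos i ℓ e →
            (Incomp a (x ℓ) ∨ Incomp b (x ℓ))) ∧
      ∃ N1 N2 : ℕ, ∀ e : ℤ, (e = -1 ∨ e = 0 ∨ e = 1) →
        (NN n k x i ℓ e true false).ncard = N1 ∧
        (NN n k x i ℓ e false true).ncard = N1 ∧
        (NN n k x i ℓ e true true).ncard = N2) ↔
    ((NN n k x i ℓ (-1) false false).ncard = 0 ∧
      (NN n k x i ℓ 1 false false).ncard = 0) := by
  classical
  constructor
  · rintro ⟨hcomp, -⟩
    have key : ∀ e : ℤ, (e = -1 ∨ e = 0 ∨ e = 1) → NN n k x i ℓ e false false = ∅ := by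
      intro e he
      rw [Set.eq_empty_iff_forall_notMem]
      intro σ hσ
      obtain ⟨⟨hl1, hl2⟩, ⟨hh1, hh2⟩⟩ := pos_bounds hsetup he
      obtain ⟨a, ha⟩ := hσ.1.1.surj hsetup.hcard hl1 hl2
      obtain ⟨b, hb⟩ := hσ.1.1.surj hsetup.hcard hh1 hh2
      rcases hcomp e he σ hσ.1 a b ha hb with hI | hI
      · exact Bool.false_ne_true ((hσ.2.1 a ha).1 hI)
      · exact Bool.false_ne_true ((hσ.2.2 b hb).1 hI)
    constructor
    · rw [key (-1) (by norm_num)]; exact Set.ncard_empty _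
    · rw [key 1 (by norm_num)]; exact Set.ncard_empty _
  · rintro ⟨hm1, hp1⟩
    set na := (NN n k x i ℓ 0 true true).ncard with hna
    set nb := (NN n k x i ℓ 0 true false).ncard with hnb
    set nc := (NN n k x i ℓ 0 false true).ncard with hnc
    set nd := (NN n k x i ℓ 0 false false).ncard with hnd
    set ncm := (NN n k x i ℓ (-1) false true).ncard with hncm
    set nbp := (NN n k x i ℓ 1 true false).ncard with hnbp
    -- the three partition identities
    have hN0 : (N n k x i ℓ 0).ncard = na + nb + (nc + nd) :=
      N_ncard_split hsetup (by norm_num)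
    have hNm : (N n k x i ℓ (-1)).ncard = na + nb + (ncm + 0) := by
      rw [N_ncard_split hsetup (by norm_num : (-1 : ℤ) = -1 ∨ (-1:ℤ) = 0 ∨ (-1:ℤ) = 1),
        NN_ncard_eq_A hsetup true, NN_ncard_eq_A hsetup false, hm1]
    have hNp : (N n k x i ℓ 1).ncard = na + nbp + (nc + 0) := by
      rw [N_ncard_split hsetup (by norm_num : (1 : ℤ) = -1 ∨ (1:ℤ) = 0 ∨ (1:ℤ) = 1),
        NN_ncard_eq_B hsetup true, NN_ncard_eq_B hsetup false, hp1]
    have hcm : ncm ≤ nb := NN_ncard_le_C1 hsetup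
    have hbp : nbp ≤ nc := NN_ncard_le_C2 hsetup
    -- integer arithmetic
    have heqZ : ((na : ℤ) + nb + nc + nd) ^ 2 = ((na : ℤ) + nb + ncm) * ((na : ℤ) + nbp + nc) := by
      have := heq
      rw [hN0, hNm, hNp] at this
      have := congrArg (fun t : ℕ => (t : ℤ)) this
      push_cast at this
      linarith [this]
    have hza : (0 : ℤ) ≤ (na : ℤ) := Int.natCast_nonneg _
    have hzb : (0 : ℤ) ≤ (nb : ℤ) := Int.natCast_nonneg _
    have hzc : (0 : ℤ) ≤ (nc : ℤ) := Int.natCast_nonneg _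
    have hzd : (0 : ℤ) ≤ (nd : ℤ) := Int.natCast_nonneg _
    have hzcm : ((ncm : ℤ)) ≤ (nb : ℤ) := by exact_mod_cast hcm
    have hzcm0 : (0 : ℤ) ≤ (ncm : ℤ) := Int.natCast_nonneg _
    have hzbp : ((nbp : ℤ)) ≤ (nc : ℤ) := by exact_mod_cast hbp
    have hzbp0 : (0 : ℤ) ≤ (nbp : ℤ) := Int.natCast_nonneg _
    have h1 : ((na : ℤ) + nb + ncm) * ((na : ℤ) + nbp + nc) ≤
        ((na : ℤ) + 2 * nb) * ((na : ℤ) + 2 * nc) := by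
      have := mul_le_mul (by linarith : (na : ℤ) + nb + ncm ≤ (na : ℤ) + 2 * nb)
        (by linarith : (na : ℤ) + nbp + nc ≤ (na : ℤ) + 2 * nc)
        (by linarith) (by linarith)
      linarith
    have h2 : ((na : ℤ) + 2 * nb) * ((na : ℤ) + 2 * nc) + ((nb : ℤ) - nc) ^ 2 =
        ((na : ℤ) + nb + nc) ^ 2 := by ring
    have h3 : ((na : ℤ) + nb + nc) ^ 2 ≤ ((na : ℤ) + nb + nc + nd) ^ 2 := by
      have := pow_le_pow_left₀ (by linarith : (0:ℤ) ≤ (na : ℤ) + nb + nc)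
        (by linarith : (na : ℤ) + nb + nc ≤ (na : ℤ) + nb + nc + nd) 2
      linarith [this]
    have hsq : ((nb : ℤ) - nc) ^ 2 ≤ 0 := by linarith
    have hsqz : ((nb : ℤ) - nc) ^ 2 = 0 := le_antisymm hsq (sq_nonneg _)
    have hbcZ : (nb : ℤ) = nc := by
      have := pow_eq_zero_iff (n := 2) (by norm_num) |>.mp hsqz
      linarith
    have h5 : ((na : ℤ) + nb + nc + nd) ^ 2 ≤ ((na : ℤ) + nb + nc) ^ 2 := by linarith
    have hprod : (0 : ℤ) ≤ (nd : ℤ) * ((na : ℤ) + nb + nc) :=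
      mul_nonneg hzd (by linarith)
    have hid : ((na : ℤ) + nb + nc + nd) ^ 2 =
        ((na : ℤ) + nb + nc) ^ 2 + 2 * ((nd : ℤ) * ((na : ℤ) + nb + nc)) + (nd : ℤ) ^ 2 := by
      ring
    have hd2 : ((nd : ℤ)) ^ 2 ≤ 0 := by linarith
    have hdZ : (nd : ℤ) = 0 := by
      have := pow_eq_zero_iff (n := 2) (by norm_num) |>.mp (le_antisymm hd2 (sq_nonneg _))
      linarith
    have hbc : nb = nc := by exact_mod_cast hbcZ
    have hd : nd = 0 := by exact_mod_cast hdZ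
    -- now get ncm = nb and nbp = nc
    have heqZ2 : ((na : ℤ) + 2 * nb) ^ 2 = ((na : ℤ) + nb + ncm) * ((na : ℤ) + nbp + nb) := by
      rw [← hbcZ] at heqZ
      rw [hdZ] at heqZ
      linarith [heqZ]
    have hcmb : ncm = nb := by
      by_cases hz : (na : ℤ) + 2 * nb = 0
      · have : nb = 0 := by omega
        omega
      · have hpos : (0 : ℤ) < (na : ℤ) + 2 * nb := by
          rcases lt_or_eq_of_le (by linarith : (0:ℤ) ≤ (na : ℤ) + 2 * nb) with h | h
          · exact h
          · exact absurd h.symm hz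
        have hle : ((na : ℤ) + 2 * nb) * ((na : ℤ) + 2 * nb) ≤
            ((na : ℤ) + nb + ncm) * ((na : ℤ) + 2 * nb) := by
          have : ((na : ℤ) + nb + ncm) * ((na : ℤ) + nbp + nb) ≤
              ((na : ℤ) + nb + ncm) * ((na : ℤ) + 2 * nb) := by
            apply mul_le_mul_of_nonneg_left (by linarith [hzbp, hbcZ]) (by linarith)
          have hpow : ((na : ℤ) + 2 * nb) * ((na : ℤ) + 2 * nb) = ((na : ℤ) + 2 * nb) ^ 2 := by
            ring
          linarith [heqZ2, this, hpow]
        have := le_of_mul_le_mul_right hle hpos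
        have : (nb : ℤ) ≤ ncm := by linarith
        omega
    have hbpc : nbp = nc := by
      by_cases hz : (na : ℤ) + 2 * nb = 0
      · have : nb = 0 := by omega
        omega
      · have hpos : (0 : ℤ) < (na : ℤ) + 2 * nb := by
          rcases lt_or_eq_of_le (by linarith : (0:ℤ) ≤ (na : ℤ) + 2 * nb) with h | h
          · exact h
          · exact absurd h.symm hz
        have hle : ((na : ℤ) + 2 * nb) * ((na : ℤ) + 2 * nb) ≤
            ((na : ℤ) + nbp + nb) * ((na : ℤ) + 2 * nb) := by
          have : ((na : ℤ) + nb + ncm) * ((na : ℤ) + nbp + nb) ≤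
              ((na : ℤ) + 2 * nb) * ((na : ℤ) + nbp + nb) := by
            apply mul_le_mul_of_nonneg_right (by linarith) (by linarith [hzbp, hbcZ])
          have hpow : ((na : ℤ) + 2 * nb) * ((na : ℤ) + 2 * nb) = ((na : ℤ) + 2 * nb) ^ 2 := by
            ring
          linarith [heqZ2, this, hpow]
        have := le_of_mul_le_mul_right hle hpos
        have : (nb : ℤ) ≤ nbp := by linarith
        omega
    -- emptiness of the three (∼,∼)-classes
    have hempty : ∀ e : ℤ, (e = -1 ∨ e = 0 ∨ e = 1) → NN n k x i ℓ e false false = ∅ := by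
      intro e he
      rcases he with rfl | rfl | rfl
      · exact (Set.ncard_eq_zero (NN_finite _ _ _)).1 hm1
      · exact (Set.ncard_eq_zero (NN_finite _ _ _)).1 hd
      · exact (Set.ncard_eq_zero (NN_finite _ _ _)).1 hp1
    constructor
    · intro e he σ hσ a b ha hb
      by_contra hcon
      push_neg at hcon
      obtain ⟨hIa, hIb⟩ := hcon
      have hmem : σ ∈ NN n k x i ℓ e false false := by
        refine ⟨hσ, ?_, ?_⟩
        · intro a' ha'
          have : a' = a := hσ.1.1 (ha'.trans ha.symm)
          subst this
          exact iff_of_false hIa Bool.false_ne_true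
        · intro b' hb'
          have : b' = b := hσ.1.1 (hb'.trans hb.symm)
          subst this
          exact iff_of_false hIb Bool.false_ne_true
      rw [hempty e he] at hmem
      exact hmem
    · refine ⟨nb, na, ?_⟩
      intro e he
      rcases he with rfl | rfl | rfl
      · exact ⟨NN_ncard_eq_A hsetup false, hcmb, NN_ncard_eq_A hsetup true⟩
      · exact ⟨rfl, hbc.symm, rfl⟩
      · refine ⟨hbpc.trans hbc.symm, ?_, NN_ncard_eq_B hsetup true⟩
        · rw [NN_ncard_eq_B hsetup false]; exact hbc.symm

end Stanley
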